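/- arXiv:1303.0784 — 5 statements merged into one kernel-verified Lean document; each statement's English description precedes it below -/
import Mathlib

section
/- Let D be an m×m real matrix such that 1 is not an eigenvalue of D (equivalently, det(I − D) ≠ 0). Then the growth rate of the sequence n ↦ det(I − Dⁿ) equals the product, over all complex eigenvalues λ of D counted with multiplicity, of max(1,|λ|); that is, max(1, limsup_{n→∞} |det(I − Dⁿ)|^{1/n}) = ∏_{λ ∈ spec(D)} max(1, |λ|). -/
/-!
Over `ℂ`, `det (1 - Dⁿ) = ∏ (1 - λⁿ)` over the eigenvalues `λ` of `D`, and each factor is at most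
`2 * max 1 |λ| ^ n`, which gives the upper bound. For the lower bound, a factor with `|λ| ≠ 1` is
at least a constant times `max 1 |λ| ^ n` for every `n`. The eigenvalues on the unit circle form a
point of a compact torus, so infinitely often all their `n`-th powers are simultaneously close
to `1`; for such `n` each `λ ^ (n + 1)` is close to `λ ≠ 1`, keeping `|1 - λ ^ (n + 1)|` away from
`0`. Hence `|det (1 - Dⁿ)|` is squeezed between constant multiples of `(∏ max 1 |λ|)ⁿ`, the upper
one always and the lower one infinitely often.
-/

open Filter Polynomial Topology

namespace Matrix

section IsAlgClosed

variable {n K : Type*} [Fintype n] [DecidableEq n] [Field K] [IsAlgClosed K]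

theorem card_roots_charpoly (M : Matrix n n K) :
    Multiset.card M.charpoly.roots = Fintype.card n := by
  rw [← (IsAlgClosed.splits M.charpoly).natDegree_eq_card_roots, charpoly_natDegree_eq_dim]

theorem det_sub_scalar_eq_prod_roots_charpoly (M : Matrix n n K) (a : K) :
    (M - scalar n a).det = (M.charpoly.roots.map (· - a)).prod := by
  have hneg : M - scalar n a = -(scalar n a - M) := (neg_sub _ _).symm
  rw [hneg, det_neg, ← eval_charpoly,
    (IsAlgClosed.splits M.charpoly).eval_eq_prod_roots_of_monic M.charpoly_monic,
    ← card_roots_charpoly M]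
  simpa [Multiset.map_map, Function.comp_def] using
    (Multiset.prod_map_neg (M.charpoly.roots.map (a - ·))).symm

theorem det_aeval_eq_prod_roots_charpoly (M : Matrix n n K) (p : K[X]) :
    (aeval M p).det = (M.charpoly.roots.map p.eval).prod := by
  let detAeval : K[X] →* K := detMonoidHom.comp (aeval M).toMonoidHom
  have hC (c : K) : detAeval (C c) = c ^ Fintype.card n := by
    simp [detAeval, Algebra.algebraMap_eq_smul_one]
  have hlin (a : K) : detAeval (X - C a) = (M.charpoly.roots.map (· - a)).prod := by
    rw [← det_sub_scalar_eq_prod_roots_charpoly]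
    simp [detAeval, algebraMap_eq_diagonal, Pi.algebraMap_def]
  calc (aeval M p).det = detAeval p := rfl
    _ = p.leadingCoeff ^ Fintype.card n *
          (p.roots.map fun a => (M.charpoly.roots.map (· - a)).prod).prod := by
        conv_lhs => rw [(IsAlgClosed.splits p).eq_prod_roots]
        rw [map_mul, map_multiset_prod, Multiset.map_map, hC]
        simp only [Function.comp_def, hlin]
    _ = (M.charpoly.roots.map p.eval).prod := by
        simp_rw [(IsAlgClosed.splits p).eval_eq_prod_roots, Multiset.prod_map_mul,
          Multiset.map_const', Multiset.prod_replicate, card_roots_charpoly]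
        rw [Multiset.prod_map_prod_map]

end IsAlgClosed

theorem abs_det_one_sub_pow {n : Type*} [Fintype n] [DecidableEq n] (D : Matrix n n ℝ) (k : ℕ) :
    |(1 - D ^ k).det| = ((D.map Complex.ofReal).charpoly.roots.map fun z => ‖1 - z ^ k‖).prod := by
  have hdet : ((1 - D ^ k).det : ℂ) = (aeval (D.map Complex.ofReal) (1 - X ^ k : ℂ[X])).det := by
    rw [aeval_sub, aeval_one, aeval_X_pow, ← Complex.ofRealHom_eq_coe, RingHom.map_det,
      map_sub, map_one, map_pow]
    rfl
  rw [← Real.norm_eq_abs, ← Complex.norm_real, hdet, det_aeval_eq_prod_roots_charpoly,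
    ← normHom_apply, map_multiset_prod, Multiset.map_map]
  simp

end Matrix

theorem norm_one_sub_pow_le {R : Type*} [SeminormedRing R] [NormOneClass R] (z : R) (n : ℕ) :
    ‖1 - z ^ n‖ ≤ 2 * max 1 ‖z‖ ^ n := by
  have h1 : (1 : ℝ) ≤ max 1 ‖z‖ ^ n := one_le_pow₀ (le_max_left _ _)
  have h2 : ‖z ^ n‖ ≤ max 1 ‖z‖ ^ n :=
    (norm_pow_le z n).trans (pow_le_pow_left₀ (norm_nonneg z) (le_max_right _ _) n)
  calc ‖1 - z ^ n‖ ≤ ‖(1 : R)‖ + ‖z ^ n‖ := norm_sub_le _ _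
    _ ≤ 2 * max 1 ‖z‖ ^ n := by rw [norm_one]; linarith

theorem abs_one_sub_mul_max_one_pow_le {r : ℝ} (hr : 0 ≤ r) (n : ℕ) :
    |1 - r| * max 1 r ^ n ≤ |1 - r ^ (n + 1)| := by
  have hgeom : |1 - r ^ (n + 1)| = |1 - r| * ∑ i ∈ Finset.range (n + 1), r ^ i := by
    rw [abs_sub_comm, ← geom_sum_mul, abs_mul, abs_sub_comm r,
      abs_of_nonneg (Finset.sum_nonneg fun i _ => pow_nonneg hr i), mul_comm]
  have hterm (i : ℕ) (hi : i ≤ n) : r ^ i ≤ ∑ i ∈ Finset.range (n + 1), r ^ i :=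
    Finset.single_le_sum (fun j _ => pow_nonneg hr j) (Finset.mem_range_succ_iff.2 hi)
  rw [hgeom]
  gcongr
  rcases le_total r 1 with h | h
  · simpa [max_eq_left h] using hterm 0 n.zero_le
  · simpa [max_eq_right h] using hterm n le_rfl

theorem abs_one_sub_norm_mul_max_one_pow_le {𝕜 : Type*} [NormedDivisionRing 𝕜] (z : 𝕜) (n : ℕ) :
    |1 - ‖z‖| * max 1 ‖z‖ ^ n ≤ ‖1 - z ^ (n + 1)‖ :=
  calc |1 - ‖z‖| * max 1 ‖z‖ ^ n ≤ |‖(1 : 𝕜)‖ - ‖z ^ (n + 1)‖| := by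
        simpa using abs_one_sub_mul_max_one_pow_le (norm_nonneg z) n
    _ ≤ ‖1 - z ^ (n + 1)‖ := abs_norm_sub_norm_le _ _

theorem frequently_pow_mem_nhds_one {G : Type*} [Group G] [TopologicalSpace G]
    [IsTopologicalGroup G] [CompactSpace G] (g : G) {U : Set G} (hU : U ∈ 𝓝 1) :
    ∃ᶠ n in atTop, g ^ n ∈ U := by
  obtain ⟨x, hx⟩ := exists_clusterPt_of_compactSpace (Filter.map (g ^ ·) atTop)
  have hdiv : (fun p : G × G => p.1 * p.2⁻¹) ⁻¹' U ∈ 𝓝 (x, x) :=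
    continuousAt_fst.mul continuousAt_snd.inv (by simpa)
  rw [nhds_prod_eq] at hdiv
  obtain ⟨W, hW, hWU⟩ := mem_prod_self_iff.1 hdiv
  have hfreq : ∃ᶠ n in atTop, g ^ n ∈ W := mapClusterPt_iff_frequently.1 hx W hW
  refine frequently_atTop.2 fun N => ?_
  obtain ⟨a, -, ha⟩ := frequently_atTop.1 hfreq 0
  obtain ⟨b, hb, hbW⟩ := frequently_atTop.1 hfreq (a + N)
  refine ⟨b - a, by omega, ?_⟩
  rw [pow_sub g (by omega : a ≤ b)]
  exact hWU (Set.mk_mem_prod hbW ha)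

theorem Complex.frequently_forall_norm_pow_sub_one_lt (s : Finset ℂ) (hs : ∀ z ∈ s, ‖z‖ = 1)
    {ε : ℂ → ℝ} (hε : ∀ z ∈ s, 0 < ε z) :
    ∃ᶠ n in atTop, ∀ z ∈ s, ‖z ^ n - 1‖ < ε z := by
  let g : s → Circle := fun z => ⟨z, mem_sphere_zero_iff_norm.2 (hs z z.2)⟩
  have hU : {w : s → Circle | ∀ z, ‖(w z : ℂ) - 1‖ < ε z} ∈ 𝓝 1 := by
    refine eventually_all.2 fun z => ?_
    have hcont : Continuous fun w : s → Circle => ‖(w z : ℂ) - 1‖ := by fun_prop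
    exact hcont.continuousAt.eventually_lt continuousAt_const (by simpa using hε z z.2)
  exact (frequently_pow_mem_nhds_one g hU).mono fun n hn z hz => by simpa using hn ⟨z, hz⟩

section OneSubPow

variable {𝕜 : Type*} [NormedDivisionRing 𝕜]

/-- On the unit circle the bound comes from `z ^ (n + 1)` returning close to `z`, off it from
`|1 - ‖z‖ ^ (n + 1)|`. -/
noncomputable def oneSubPowConst (z : 𝕜) : ℝ :=
  if ‖z‖ = 1 then ‖1 - z‖ / 2 else |1 - ‖z‖| / max 1 ‖z‖

theorem oneSubPowConst_pos {z : 𝕜} (hz : z ≠ 1) : 0 < oneSubPowConst z := by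
  unfold oneSubPowConst
  split_ifs with h
  · have : 0 < ‖1 - z‖ := norm_pos_iff.2 (sub_ne_zero.2 hz.symm)
    positivity
  · have : 0 < |1 - ‖z‖| := abs_pos.2 (sub_ne_zero.2 (Ne.symm h))
    have : 0 < max 1 ‖z‖ := lt_max_of_lt_left one_pos
    positivity

theorem oneSubPowConst_mul_le_norm_one_sub_pow {z : 𝕜} {n : ℕ}
    (hz : ‖z‖ = 1 → ‖z ^ n - 1‖ ≤ ‖1 - z‖ / 2) :
    oneSubPowConst z * max 1 ‖z‖ ^ (n + 1) ≤ ‖1 - z ^ (n + 1)‖ := by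
  unfold oneSubPowConst
  split_ifs with h
  · have hrec : ‖z ^ (n + 1) - z‖ ≤ ‖1 - z‖ / 2 := by
      rw [pow_succ, ← sub_one_mul, norm_mul, h, mul_one]
      exact hz h
    have htri := norm_sub_norm_le (1 - z) (z ^ (n + 1) - z)
    rw [sub_sub_sub_cancel_right] at htri
    rw [h, max_self, one_pow, mul_one]
    linarith
  · have hM : 0 < max 1 ‖z‖ := lt_max_of_lt_left one_pos
    calc |1 - ‖z‖| / max 1 ‖z‖ * max 1 ‖z‖ ^ (n + 1) = |1 - ‖z‖| * max 1 ‖z‖ ^ n := by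
          field_simp
          ring
      _ ≤ ‖1 - z ^ (n + 1)‖ := abs_one_sub_norm_mul_max_one_pow_le z n

end OneSubPow

theorem tendsto_mul_pow_rpow_inv {c P : ℝ} (hc : 0 < c) (hP : 0 ≤ P) :
    Tendsto (fun n : ℕ => (c * P ^ n) ^ (n : ℝ)⁻¹) atTop (𝓝 P) := by
  have hinv : Tendsto (fun n : ℕ => (n : ℝ)⁻¹) atTop (𝓝 0) :=
    tendsto_inv_atTop_zero.comp tendsto_natCast_atTop_atTop
  have hroot : Tendsto (fun n : ℕ => c ^ (n : ℝ)⁻¹ * P) atTop (𝓝 P) := by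
    simpa using ((Real.continuousAt_const_rpow hc.ne').tendsto.comp hinv).mul_const P
  refine hroot.congr' (eventually_atTop.2 ⟨1, fun n hn => ?_⟩)
  dsimp only
  rw [Real.mul_rpow hc.le (by positivity), Real.pow_rpow_inv_natCast hP (by omega)]

theorem limsup_rpow_inv_eq_of_le_of_frequently_le {a : ℕ → ℝ} {c C P : ℝ} (ha : ∀ n, 0 ≤ a n)
    (hc : 0 < c) (hC : 0 < C) (hP : 0 ≤ P) (hle : ∀ n, a n ≤ C * P ^ n)
    (hge : ∃ᶠ n in atTop, c * P ^ n ≤ a n) :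
    limsup (fun n : ℕ => a n ^ (n : ℝ)⁻¹) atTop = P := by
  have hupper := tendsto_mul_pow_rpow_inv hC hP
  have hlower := tendsto_mul_pow_rpow_inv hc hP
  have hroot_le : ∀ n : ℕ, a n ^ (n : ℝ)⁻¹ ≤ (C * P ^ n) ^ (n : ℝ)⁻¹ := fun n =>
    Real.rpow_le_rpow (ha n) (hle n) (by positivity)
  apply le_antisymm
  · calc limsup (fun n : ℕ => a n ^ (n : ℝ)⁻¹) atTop
        ≤ limsup (fun n : ℕ => (C * P ^ n) ^ (n : ℝ)⁻¹) atTop :=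
          limsup_le_limsup (Eventually.of_forall hroot_le)
            (isCoboundedUnder_le_of_le atTop fun n => Real.rpow_nonneg (ha n) _)
            hupper.isBoundedUnder_le
      _ = P := hupper.limsup_eq
  · refine le_of_forall_pos_le_add fun ε hε => ?_
    have hfreq : ∃ᶠ n in atTop, P - ε ≤ a n ^ (n : ℝ)⁻¹ :=
      (hge.and_eventually (hlower.eventually (eventually_ge_nhds (by linarith)))).mono
        fun n ⟨hn, hnear⟩ => hnear.trans (Real.rpow_le_rpow (by positivity) hn (by positivity))
    have hbdd : IsBoundedUnder (· ≤ ·) atTop fun n : ℕ => a n ^ (n : ℝ)⁻¹ :=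
      hupper.isBoundedUnder_le.mono_le (Eventually.of_forall hroot_le)
    linarith [le_limsup_of_frequently_le hfreq hbdd]

theorem Multiset.limsup_prod_norm_one_sub_pow_rpow_inv (R : Multiset ℂ) (hR : ∀ z ∈ R, z ≠ 1) :
    limsup (fun n : ℕ => (R.map fun z => ‖1 - z ^ n‖).prod ^ (n : ℝ)⁻¹) atTop =
      (R.map fun z => max 1 ‖z‖).prod := by
  set P := (R.map fun z => max 1 ‖z‖).prod
  have hP : 1 ≤ P := one_le_prod_map fun z _ => le_max_left 1 ‖z‖
  refine limsup_rpow_inv_eq_of_le_of_frequently_le (c := (R.map oneSubPowConst).prod)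
    (C := 2 ^ card R) (fun n => prod_map_nonneg fun z _ => norm_nonneg _)
    (prod_pos fun c hc => ?_) (by positivity) (by linarith) (fun n => ?_) ?_
  · obtain ⟨z, hz, rfl⟩ := mem_map.1 hc
    exact oneSubPowConst_pos (hR z hz)
  · calc (R.map fun z => ‖1 - z ^ n‖).prod ≤ (R.map fun z => 2 * max 1 ‖z‖ ^ n).prod :=
          prod_map_le_prod_map₀ _ _ (fun _ _ => norm_nonneg _) fun z _ => norm_one_sub_pow_le z n
      _ = 2 ^ card R * P ^ n := by rw [prod_map_mul, prod_map_pow, map_const', prod_replicate]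
  · have hrec := Complex.frequently_forall_norm_pow_sub_one_lt (R.toFinset.filter (‖·‖ = 1))
      (fun z hz => (Finset.mem_filter.1 hz).2) (ε := fun z => ‖1 - z‖ / 2)
      fun z hz => by
        have : 0 < ‖1 - z‖ := norm_pos_iff.2 (sub_ne_zero.2
          (hR z (mem_toFinset.1 (Finset.mem_filter.1 hz).1)).symm)
        positivity
    refine (tendsto_add_atTop_nat 1).frequently (hrec.mono fun n hn => ?_)
    calc (R.map oneSubPowConst).prod * P ^ (n + 1)
        = (R.map fun z => oneSubPowConst z * max 1 ‖z‖ ^ (n + 1)).prod := by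
          rw [prod_map_mul, prod_map_pow]
      _ ≤ (R.map fun z => ‖1 - z ^ (n + 1)‖).prod :=
          prod_map_le_prod_map₀ _ _
            (fun z hz => mul_nonneg (oneSubPowConst_pos (hR z hz)).le (by positivity))
            fun z hz => oneSubPowConst_mul_le_norm_one_sub_pow fun h =>
              (hn z (by simp [hz, h])).le

/-- The growth rate of `n ↦ det(I - Dⁿ)` equals the product over all complex
eigenvalues `λ` of `D` (counted with multiplicity) of `max 1 |λ|`, provided
`1` is not an eigenvalue of `D`. -/
theorem growth_det_one_sub_pow (m : ℕ) (D : Matrix (Fin m) (Fin m) ℝ)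
    (h : (1 - D).det ≠ 0) :
    max 1 (Filter.limsup
        (fun n : ℕ => |(1 - D ^ n).det| ^ ((n : ℝ)⁻¹)) Filter.atTop) =
      (((D.map (Complex.ofReal)).charpoly.roots).map
        (fun lam => max 1 ‖lam‖)).prod := by
  have hR : ∀ z ∈ (D.map Complex.ofReal).charpoly.roots, z ≠ 1 := by
    rintro z hz rfl
    have hdet := D.abs_det_one_sub_pow 1
    rw [pow_one, Multiset.prod_eq_zero (Multiset.mem_map.2 ⟨1, hz, by simp⟩)] at hdet
    exact h (abs_eq_zero.1 hdet)
  simp_rw [Matrix.abs_det_one_sub_pow]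
  rw [Multiset.limsup_prod_norm_one_sub_pow_rpow_inv _ hR,
    max_eq_right (Multiset.one_le_prod_map fun z _ => le_max_left 1 ‖z‖)]
end

section
/- Let λ be a complex number with |λ| ≤ 1 such that λⁿ ≠ 1 for every integer n ≥ 1 (λ is not a root of unity and λ ≠ 1). Then limsup_{n→∞} (1/n)·log|1 − λⁿ| = 0. -/
/-!
The upper bound is trivial: `‖1 - λⁿ‖ ≤ 2`, so the terms are at most `log 2 / n`. For the lower
bound, `1 - λ = (1 - λⁿ⁺¹) - λ (1 - λⁿ)` and `‖λ‖ ≤ 1` show that of any two consecutive terms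
`‖1 - λⁿ‖, ‖1 - λⁿ⁺¹‖` one is at least `‖1 - λ‖ / 2 > 0`; hence infinitely many terms are at least
`log (‖1 - λ‖ / 2) / n`, which also tends to `0`.
-/

open Filter Topology

theorem Filter.limsup_eq_of_frequently_le_of_eventually_le {α β : Type*}
    [ConditionallyCompleteLinearOrder β] [TopologicalSpace β] [OrderTopology β]
    {l : Filter α} [l.NeBot] {u v w : α → β} {a : β}
    (hv : Tendsto v l (𝓝 a)) (hw : Tendsto w l (𝓝 a))
    (hvu : ∃ᶠ x in l, v x ≤ u x) (huw : u ≤ᶠ[l] w) :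
    limsup u l = a := by
  have hu_bdd : IsBoundedUnder (· ≤ ·) l u := hw.isBoundedUnder_le.mono_le huw
  have hu_cobdd : IsCoboundedUnder (· ≤ ·) l u := by
    obtain ⟨b, hb⟩ := hv.isBoundedUnder_ge.eventually_ge
    exact .of_frequently_ge <| (hb.and_frequently hvu).mono fun _ h ↦ h.1.trans h.2
  refine le_antisymm ?_ ?_
  · exact (limsup_le_limsup huw hu_cobdd hw.isBoundedUnder_le).trans_eq hw.limsup_eq
  · exact hv.liminf_eq.symm.trans_le
      (liminf_le_limsup_of_frequently_le hvu hv.isBoundedUnder_ge hu_bdd)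

variable {R : Type*} [NormedRing R]

theorem norm_one_sub_le_norm_one_sub_pow_add_norm_one_sub_pow_succ {a : R} (ha : ‖a‖ ≤ 1)
    (n : ℕ) : ‖1 - a‖ ≤ ‖1 - a ^ n‖ + ‖1 - a ^ (n + 1)‖ :=
  calc ‖1 - a‖ = ‖(1 - a ^ (n + 1)) - a * (1 - a ^ n)‖ := by rw [pow_succ']; noncomm_ring
    _ ≤ ‖1 - a ^ (n + 1)‖ + ‖a‖ * ‖1 - a ^ n‖ :=
      (norm_sub_le _ _).trans (by gcongr; exact norm_mul_le _ _)
    _ ≤ ‖1 - a ^ n‖ + ‖1 - a ^ (n + 1)‖ := by nlinarith [norm_nonneg (1 - a ^ n)]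

theorem frequently_half_norm_one_sub_le_norm_one_sub_pow {a : R} (ha : ‖a‖ ≤ 1) :
    ∃ᶠ n in atTop, ‖1 - a‖ / 2 ≤ ‖1 - a ^ n‖ := by
  refine frequently_atTop.2 fun N ↦ ?_
  have := norm_one_sub_le_norm_one_sub_pow_add_norm_one_sub_pow_succ ha N
  by_cases hN : ‖1 - a‖ / 2 ≤ ‖1 - a ^ N‖
  · exact ⟨N, le_rfl, hN⟩
  · exact ⟨N + 1, N.le_succ, by linarith⟩

theorem norm_one_sub_pow_le_two [NormOneClass R] {a : R} (ha : ‖a‖ ≤ 1) (n : ℕ) :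
    ‖1 - a ^ n‖ ≤ 2 :=
  calc ‖1 - a ^ n‖ ≤ ‖(1 : R)‖ + ‖a ^ n‖ := norm_sub_le _ _
    _ ≤ 1 + 1 := by
      rw [norm_one]
      gcongr
      exact (norm_pow_le a n).trans (pow_le_one₀ (norm_nonneg a) ha)
    _ = 2 := one_add_one_eq_two

/-- If `|λ| ≤ 1` and `λ` is not `1` nor a root of unity, then
`limsup (1/n)·log|1 − λⁿ| = 0`. -/
theorem limsup_log_abs_one_sub_pow (lam : ℂ) (h : ‖lam‖ ≤ 1)
    (hroot : ∀ n : ℕ, 1 ≤ n → lam ^ n ≠ 1) :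
    Filter.limsup
      (fun n : ℕ => (1 / (n : ℝ)) * Real.log (‖1 - lam ^ n‖))
      Filter.atTop = 0 := by
  have hc : 0 < ‖1 - lam‖ / 2 := by
    have : 1 - lam ≠ 0 := sub_ne_zero.2 (by simpa using (hroot 1 le_rfl).symm)
    positivity
  have hscaled (b : ℝ) : Tendsto (fun n : ℕ ↦ 1 / (n : ℝ) * b) atTop (𝓝 0) := by
    simpa using tendsto_one_div_atTop_nhds_zero_nat.mul_const b
  refine limsup_eq_of_frequently_le_of_eventually_le (hscaled (Real.log (‖1 - lam‖ / 2)))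
    (hscaled (Real.log 2)) ?_ ?_
  · refine (frequently_half_norm_one_sub_le_norm_one_sub_pow h).mono fun n hn ↦ ?_
    gcongr
  · filter_upwards [eventually_ge_atTop 1] with n hn
    have hpos : 0 < ‖1 - lam ^ n‖ := norm_pos_iff.2 (sub_ne_zero.2 (hroot n hn).symm)
    gcongr
    exact norm_one_sub_pow_le_two h n
end

section
/- Let m be a natural number, and for each k = 0,…,m let n_k be a natural number with n_{m−k} = n_k and let A_k be an invertible n_k × n_k complex matrix. Let d be a nonzero complex number and suppose that for each k there is an invertible n_k × n_k complex matrix J_k with A_kᵀ · J_k · A_{m−k} = d · J_k. Set χ = Σ_{k=0}^{m} (−1)^k n_k and ε = ∏_{k=0}^{m} (det A_k)^{(−1)^{k+1}}. Then for every α ∈ {1, −1} and every nonzero complex number z such that det(I − αz·A_k) ≠ 0 for all k, one has ∏_{k=0}^{m} det(I − (α/(dz))·A_k)^{(−1)^{k+1}} = ε · (−αdz)^{χ} · ( ∏_{k=0}^{m} det(I − αz·A_k)^{(−1)^{k+1}} )^{(−1)^m}. -/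
open Finset Matrix

/-!
The duality relation `A_kᵀ J_k A_{m-k} = d J_k` conjugates `A_{m-k}` to `d (A_kᵀ)⁻¹`, so each
factor satisfies `det(1 - c A_k) = det A_k · (-c)^{n_k} · det(1 - (cd)⁻¹ A_{m-k})`, and for
`c = α/(dz)` one has `(cd)⁻¹ = αz`. In the alternating product over `k`, the reflection
`k ↦ m - k` multiplies every exponent `(-1)^{k+1}` by `(-1)^m`, and the powers of `-c` collect
into `(-c)^{-χ} = (-αdz)^χ`.
-/

theorem neg_one_pow_sub_add_one {R : Type*} [Monoid R] [HasDistribNeg R] {m k : ℕ}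
    (hk : k ≤ m) : (-1 : R) ^ (m - k + 1) = (-1) ^ m * (-1) ^ (k + 1) := by
  obtain ⟨i, rfl⟩ := Nat.exists_eq_add_of_le hk
  rw [Nat.add_sub_cancel_left, ← pow_add, show k + i + (k + 1) = 2 * k + (i + 1) by ring,
    pow_add _ (2 * k), (even_two_mul k).neg_one_pow, one_mul]

theorem zpow_sum₀ {ι K : Type*} [CommGroupWithZero K] {a : K} (ha : a ≠ 0) (s : Finset ι)
    (f : ι → ℤ) :
    a ^ (∑ i ∈ s, f i) = ∏ i ∈ s, a ^ f i := by
  induction s using Finset.cons_induction with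
  | empty => simp
  | cons i s hi ih => rw [sum_cons, prod_cons, zpow_add₀ ha, ih]

section AlternatingProd

variable {K : Type*} [CommGroupWithZero K]

/-- The exponent is `(-1)^(k+1)`, as in the Lefschetz zeta function; this is the inverse of
`List.alternatingProd`. -/
def alternatingProd (m : ℕ) (f : ℕ → K) : K :=
  ∏ k ∈ range (m + 1), f k ^ ((-1 : ℤ) ^ (k + 1))

theorem alternatingProd_congr {m : ℕ} {f g : ℕ → K} (h : ∀ k ≤ m, f k = g k) :
    alternatingProd m f = alternatingProd m g :=
  prod_congr rfl fun k hk => by rw [h k (Nat.lt_succ_iff.mp (mem_range.mp hk))]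

theorem alternatingProd_mul (m : ℕ) (f g : ℕ → K) :
    alternatingProd m (fun k => f k * g k) = alternatingProd m f * alternatingProd m g := by
  simp only [alternatingProd, mul_zpow, prod_mul_distrib]

theorem alternatingProd_comp_sub (m : ℕ) (f : ℕ → K) :
    alternatingProd m (fun k => f (m - k)) = alternatingProd m f ^ ((-1 : ℤ) ^ m) := by
  rw [alternatingProd, ← prod_range_reflect, alternatingProd, ← prod_zpow]
  refine prod_congr rfl fun k hk => ?_
  have hk : k ≤ m := Nat.lt_succ_iff.mp (mem_range.mp hk)
  rw [Nat.add_sub_cancel, Nat.sub_sub_self hk, neg_one_pow_sub_add_one hk, mul_comm,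
    _root_.zpow_mul]

theorem alternatingProd_pow {a : K} (ha : a ≠ 0) (m : ℕ) (N : ℕ → ℕ) :
    alternatingProd m (fun k => a ^ N k) =
      a⁻¹ ^ ∑ k ∈ range (m + 1), (-1 : ℤ) ^ k * N k := by
  rw [zpow_sum₀ (inv_ne_zero ha)]
  refine prod_congr rfl fun k _ => ?_
  dsimp only
  rw [← zpow_natCast, ← _root_.zpow_mul, _root_.inv_zpow', pow_succ]
  congr 1
  ring

end AlternatingProd

namespace Matrix

variable {ι : Type*} [Fintype ι] [DecidableEq ι]

theorem det_one_sub_smul_reindex {κ R : Type*} [Fintype κ] [DecidableEq κ] [CommRing R]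
    (e : ι ≃ κ) (c : R) (M : Matrix ι ι R) :
    (1 - c • reindex e e M).det = (1 - c • M).det := by
  rw [← det_reindex_self e (1 - c • M), ← coe_reindexAlgEquiv R R, map_sub, map_one,
    map_smul, coe_reindexAlgEquiv]

theorem det_sub_smul_one {K : Type*} [Field K] {t : K} (ht : t ≠ 0) (A : Matrix ι ι K) :
    (A - t • 1).det = (-t) ^ Fintype.card ι * (1 - t⁻¹ • A).det := by
  rw [← det_smul, smul_sub, smul_smul, neg_mul, mul_inv_cancel₀ ht]
  congr 1
  module

section Duality

variable {R : Type*} [CommRing R] {A B J : Matrix ι ι R} {d : R}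

theorem det_mul_det_of_transpose_mul_mul_eq_smul (hJ : IsUnit J.det)
    (h : Aᵀ * J * B = d • J) : A.det * B.det = d ^ Fintype.card ι := by
  have hdet := congrArg det h
  rw [det_mul, det_mul, det_transpose, det_smul] at hdet
  exact hJ.mul_left_cancel (by linear_combination hdet)

theorem det_mul_det_one_sub_smul_of_transpose_mul_mul_eq_smul (hJ : IsUnit J.det)
    (h : Aᵀ * J * B = d • J) (c : R) : A.det * (1 - c • B).det = (A - (c * d) • 1).det := by
  have hconj : Aᵀ * J * (1 - c • B) = (A - (c * d) • 1)ᵀ * J := by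
    rw [Matrix.mul_sub, Matrix.mul_one, Matrix.mul_smul, h, transpose_sub, transpose_smul,
      transpose_one, Matrix.sub_mul, Matrix.smul_mul, Matrix.one_mul, smul_smul]
  have hdet := congrArg det hconj
  rw [det_mul, det_mul, det_mul, det_transpose, det_transpose] at hdet
  exact hJ.mul_left_cancel (by linear_combination hdet)

end Duality

theorem det_one_sub_smul_of_transpose_mul_mul_eq_smul {K : Type*} [Field K]
    {A B J : Matrix ι ι K} {c d : K} (hJ : IsUnit J.det) (hc : c ≠ 0) (hd : d ≠ 0)
    (h : Aᵀ * J * B = d • J) :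
    (1 - c • B).det = B.det * (-c) ^ Fintype.card ι * (1 - (c * d)⁻¹ • A).det := by
  have hdual := det_mul_det_of_transpose_mul_mul_eq_smul hJ h
  have hA : A.det ≠ 0 := left_ne_zero_of_mul (hdual ▸ pow_ne_zero _ hd)
  refine mul_left_cancel₀ hA ?_
  rw [det_mul_det_one_sub_smul_of_transpose_mul_mul_eq_smul hJ h,
    det_sub_smul_one (mul_ne_zero hc hd), ← neg_mul, mul_pow, ← hdual]
  ring

end Matrix

theorem lefschetz_zeta_functional_equation_general
    (m : ℕ) (n : ℕ → ℕ)
    (hn : ∀ k, k ≤ m → n (m - k) = n k)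
    (A : (k : ℕ) → Matrix (Fin (n k)) (Fin (n k)) ℂ)
    (d : ℂ) (hd : d ≠ 0)
    (hJ : ∀ k (hk : k ≤ m), ∃ J : Matrix (Fin (n k)) (Fin (n k)) ℂ,
      IsUnit J.det ∧
        (A k)ᵀ * J * (Matrix.reindex (finCongr (hn k hk)) (finCongr (hn k hk))
          (A (m - k))) = d • J)
    (α : ℂ) (hα : α = 1 ∨ α = -1)
    (z : ℂ) (hz : z ≠ 0) :
    (∏ k ∈ Finset.range (m + 1),
        ((1 - (α / (d * z)) • A k).det) ^ ((-1 : ℤ) ^ (k + 1))) =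
      (∏ k ∈ Finset.range (m + 1), ((A k).det) ^ ((-1 : ℤ) ^ (k + 1))) *
        (-(α * d * z)) ^ (∑ k ∈ Finset.range (m + 1), (-1 : ℤ) ^ k * (n k : ℤ)) *
        ((∏ k ∈ Finset.range (m + 1),
            ((1 - (α * z) • A k).det) ^ ((-1 : ℤ) ^ (k + 1))) ^ ((-1 : ℤ) ^ m)) := by
  have hαα : α * α = 1 := by rcases hα with rfl | rfl <;> norm_num
  have hα0 : α ≠ 0 := left_ne_zero_of_mul_eq_one hαα
  set c := α / (d * z) with hc_def
  have hc : c ≠ 0 := div_ne_zero hα0 (mul_ne_zero hd hz)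
  have hcd : (c * d)⁻¹ = α * z := by
    rw [hc_def]
    field_simp
    linear_combination -hαα
  have hc_inv : (-c)⁻¹ = -(α * d * z) := by
    rw [hc_def]
    field_simp
    linear_combination hαα
  have factor : ∀ k ≤ m,
      (1 - c • A k).det = (A k).det * (-c) ^ n k * (1 - (α * z) • A (m - k)).det := by
    intro k hk
    obtain ⟨J, hJ_det, hrel⟩ := hJ (m - k) (Nat.sub_le m k)
    have hcard : Fintype.card (Fin (n (m - k))) = n k := by rw [Fintype.card_fin, hn k hk]
    have := det_one_sub_smul_of_transpose_mul_mul_eq_smul hJ_det hc hd hrel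
    rwa [det_one_sub_smul_reindex, det_reindex_self, hcard, hcd, Nat.sub_sub_self hk] at this
  show alternatingProd m (fun k => (1 - c • A k).det) = alternatingProd m (fun k => (A k).det) *
    _ * alternatingProd m (fun k => (1 - (α * z) • A k).det) ^ (-1 : ℤ) ^ m
  rw [alternatingProd_congr factor, alternatingProd_mul, alternatingProd_mul,
    alternatingProd_pow (neg_ne_zero.2 hc),
    alternatingProd_comp_sub m fun k => (1 - (α * z) • A k).det, hc_inv]

/-- Functional equation for the Lefschetz-zeta-type product: if the invertible
matrices `A k` (`k = 0,…,m`) satisfy a Poincaré-duality relation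
`(A k)ᵀ · J k · A (m−k) = d · J k` with `J k` invertible, then the alternating
product of `det(I − (α/(dz))·A k)` equals
`ε · (−αdz)^χ · (∏ det(I − αz·A k)^{(−1)^{k+1}})^{(−1)^m}`. -/
theorem lefschetz_zeta_functional_equation
    (m : ℕ) (n : ℕ → ℕ)
    (hn : ∀ k, k ≤ m → n (m - k) = n k)
    (A : (k : ℕ) → Matrix (Fin (n k)) (Fin (n k)) ℂ)
    (hA : ∀ k, k ≤ m → IsUnit (A k).det)
    (d : ℂ) (hd : d ≠ 0)
    (hJ : ∀ k (hk : k ≤ m), ∃ J : Matrix (Fin (n k)) (Fin (n k)) ℂ,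
      IsUnit J.det ∧
        (A k)ᵀ * J * (Matrix.reindex (finCongr (hn k hk)) (finCongr (hn k hk))
          (A (m - k))) = d • J)
    (α : ℂ) (hα : α = 1 ∨ α = -1)
    (z : ℂ) (hz : z ≠ 0)
    (hdet : ∀ k, k ≤ m → (1 - (α * z) • A k).det ≠ 0) :
    (∏ k ∈ Finset.range (m + 1),
        ((1 - (α / (d * z)) • A k).det) ^ ((-1 : ℤ) ^ (k + 1))) =
      (∏ k ∈ Finset.range (m + 1), ((A k).det) ^ ((-1 : ℤ) ^ (k + 1))) *
        (-(α * d * z)) ^ (∑ k ∈ Finset.range (m + 1), (-1 : ℤ) ^ k * (n k : ℤ)) *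
        ((∏ k ∈ Finset.range (m + 1),
            ((1 - (α * z) • A k).det) ^ ((-1 : ℤ) ^ (k + 1))) ^ ((-1 : ℤ) ^ m)) :=
  lefschetz_zeta_functional_equation_general m n hn A d hd hJ α hα z hz
end

section
/- Let X be a set, f : X → X a function, and n ≥ 1 a natural number. Suppose that for every divisor d of n the fixed point set Fix(f^d) = {x ∈ X : f^d(x) = x} is finite. Then n divides the integer Σ_{d ∣ n} μ(d) · #Fix(f^{n/d}), where μ is the Möbius function and #Fix denotes cardinality. -/
/-!
Sorting the fixed points of `f^[m]` by least period gives `#Fix(f^[m]) = ∑_{e ∣ m} P e`, where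
`P e` is the number of points of least period `e`. Möbius inversion turns the sum in the theorem
into `P n`, and the points of least period `n` fall into periodic orbits of exactly `n` points.
-/

open Function

theorem Cycle.mem_toFinset {α : Type*} [DecidableEq α] {s : Cycle α} {a : α} :
    a ∈ s.toFinset ↔ a ∈ s :=
  Quotient.inductionOn' s fun _ => List.mem_toFinset

namespace Function

variable {α : Type*} (f : α → α)

theorem card_toFinset_periodicOrbit [DecidableEq α] (x : α) :
    (periodicOrbit f x).toFinset.card = minimalPeriod f x := by
  rw [periodicOrbit, Cycle.coe_toFinset, List.toFinset_card_of_nodup, List.length_map,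
    List.length_range]
  exact Cycle.nodup_coe_iff.mp nodup_periodicOrbit

variable {f}

theorem minimalPeriod_eq_of_mem_periodicOrbit {x y : α} (hx : x ∈ periodicPts f)
    (hy : y ∈ periodicOrbit f x) : minimalPeriod f y = minimalPeriod f x := by
  obtain ⟨k, rfl⟩ := (mem_periodicOrbit_iff hx).mp hy
  exact minimalPeriod_apply_iterate hx k

theorem periodicOrbit_eq_of_mem_periodicOrbit {x y : α} (hx : x ∈ periodicPts f)
    (hy : y ∈ periodicOrbit f x) : periodicOrbit f y = periodicOrbit f x := by
  obtain ⟨k, rfl⟩ := (mem_periodicOrbit_iff hx).mp hy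
  exact periodicOrbit_apply_iterate_eq hx k

variable (f)

theorem dvd_ncard_setOf_minimalPeriod_eq {n : ℕ} (hn : 0 < n) :
    n ∣ {x | minimalPeriod f x = n}.ncard := by
  classical
  obtain hS | hS := {x | minimalPeriod f x = n}.finite_or_infinite
  swap
  · rw [hS.ncard]
    exact dvd_zero n
  have periodic {x : α} (hx : x ∈ hS.toFinset) : x ∈ periodicPts f :=
    minimalPeriod_pos_iff_mem_periodicPts.mp <| (hS.mem_toFinset.mp hx).symm ▸ hn
  rw [← hS.coe_toFinset, Set.ncard_coe_finset,
    Finset.card_eq_sum_card_image (periodicOrbit f)]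
  refine Finset.dvd_sum fun O hO => ?_
  obtain ⟨x, hx, rfl⟩ := Finset.mem_image.mp hO
  have hxn : minimalPeriod f x = n := hS.mem_toFinset.mp hx
  have fiber : {y ∈ hS.toFinset | periodicOrbit f y = periodicOrbit f x}
      = (periodicOrbit f x).toFinset := by
    ext y
    rw [Finset.mem_filter, Cycle.mem_toFinset, hS.mem_toFinset]
    refine ⟨fun ⟨hy, hyx⟩ => hyx ▸ self_mem_periodicOrbit (periodic (hS.mem_toFinset.mpr hy)),
      fun hy => ⟨?_, periodicOrbit_eq_of_mem_periodicOrbit (periodic hx) hy⟩⟩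
    exact (minimalPeriod_eq_of_mem_periodicOrbit (periodic hx) hy).trans hxn
  rw [fiber, card_toFinset_periodicOrbit, hxn]

theorem ncard_setOf_iterate_eq_self_eq_sum {m : ℕ} (hm : 0 < m)
    (hfin : {x | f^[m] x = x}.Finite) :
    {x | f^[m] x = x}.ncard = ∑ d ∈ m.divisors, {x | minimalPeriod f x = d}.ncard := by
  classical
  have mem_iff {x : α} : x ∈ hfin.toFinset ↔ minimalPeriod f x ∣ m := by
    rw [hfin.mem_toFinset, ← isPeriodicPt_iff_minimalPeriod_dvd]
    rfl
  rw [← hfin.coe_toFinset, Set.ncard_coe_finset,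
    Finset.card_eq_sum_card_fiberwise (f := minimalPeriod f) (t := m.divisors)
      fun x hx => Nat.mem_divisors.mpr ⟨mem_iff.mp hx, hm.ne'⟩]
  refine Finset.sum_congr rfl fun d hd => ?_
  rw [← Set.ncard_coe_finset, Finset.coe_filter]
  congr 1
  ext x
  simp only [Set.mem_ofPred_eq, mem_iff, and_iff_right_iff_imp]
  exact fun hx => hx ▸ Nat.dvd_of_mem_divisors hd

theorem sum_moebius_mul_ncard_setOf_iterate_eq_self {n : ℕ} (hn : 0 < n)
    (hfin : ∀ d ∈ n.divisors, {x | f^[d] x = x}.Finite) :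
    ∑ d ∈ n.divisors, ArithmeticFunction.moebius d * ({x | f^[n / d] x = x}.ncard : ℤ)
      = {x | minimalPeriod f x = n}.ncard := by
  have inversion := (ArithmeticFunction.sum_eq_iff_sum_mul_moebius_eq_on
    (f := fun e => ({x | minimalPeriod f x = e}.ncard : ℤ))
    (g := fun m => ({x | f^[m] x = x}.ncard : ℤ)) {m | m ∣ n} fun _ _ => dvd_trans).mp
    (fun m hm hmn => by
      exact_mod_cast (ncard_setOf_iterate_eq_self_eq_sum f hm
        (hfin m (Nat.mem_divisors.mpr ⟨hmn, hn.ne'⟩))).symm) n hn dvd_rfl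
  simp only [Int.cast_id] at inversion
  rwa [← Nat.sum_divisorsAntidiagonal
    fun a b => ArithmeticFunction.moebius a * ({x | f^[b] x = x}.ncard : ℤ)]

end Function

theorem gauss_congruence_fixed_points_general {X : Type*} (f : X → X) (n : ℕ)
    (hfin : ∀ d ∈ n.divisors, {x : X | f^[d] x = x}.Finite) :
    (n : ℤ) ∣ ∑ d ∈ n.divisors,
      (ArithmeticFunction.moebius d) * ({x : X | f^[n / d] x = x}.ncard : ℤ) := by
  rcases n.eq_zero_or_pos with rfl | hn
  · simp
  rw [sum_moebius_mul_ncard_setOf_iterate_eq_self f hn hfin]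
  exact_mod_cast dvd_ncard_setOf_minimalPeriod_eq f hn

/-- Gauss congruence for the counts of fixed points of iterates: if all fixed
point sets of iterates `f^d` for `d ∣ n` are finite, then
`n ∣ Σ_{d ∣ n} μ(d) · #Fix(f^{n/d})`. -/
theorem gauss_congruence_fixed_points {X : Type*} (f : X → X) (n : ℕ) (hn : 1 ≤ n)
    (hfin : ∀ d ∈ n.divisors, {x : X | f^[d] x = x}.Finite) :
    (n : ℤ) ∣ ∑ d ∈ n.divisors,
      (ArithmeticFunction.moebius d) * ({x : X | f^[n / d] x = x}.ncard : ℤ) :=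
  gauss_congruence_fixed_points_general f n hfin
end

section
/- For i = 0,…,m let A_i be a square matrix with integer entries (of size m_i × m_i), and define L(k) = Σ_{i=0}^{m} (−1)^i · tr(A_i^k) for k ≥ 1. Then for every prime p and every integer r ≥ 1, L(p^r) ≡ L(p^{r−1}) (mod p^r). -/
/-!
Write `tr (A ^ n)` as the sum, over closed walks `f : ZMod n → ι`, of the product of the
entries of `A` along `f`. Rotations of `ZMod (p ^ (t + 1))` permute the closed walks of length
`p ^ (t + 1)` and preserve their weights. A walk fixed by a nonzero rotation is fixed by the
rotation by `p ^ t`, so it is a walk of length `p ^ t` traversed `p` times and its weight is a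
`p`-th power; every other walk lies in a free orbit of size `p ^ (t + 1)`. Hence the sum of
`φ (weight)` over walks of length `p ^ (t + 1)` is congruent to the sum of `φ (weight ^ p)`
over walks of length `p ^ t` modulo `p ^ (t + 1) * d`, whenever `d` divides every
`φ (weight)`. With `φ = id` this reduces `tr (A ^ p ^ (t + 1))` to the sum of the `p`-th
powers of the weights of walks of length `p ^ t`. With `φ a = a ^ p ^ (s + 1) - a ^ p ^ s`,
which is divisible by `p ^ (s + 1)` by Euler's congruence, an induction on `t` shows that this
sum is congruent to `tr (A ^ p ^ t)` modulo `p ^ (t + 1)`.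
-/

open Finset Function

-- `ZMod n` acts on `ZMod n → ι` by rotation: `(c +ᵥ f) x = f (-c + x)`.
attribute [local instance] arrowAddAction

theorem AddAction.card_mul_dvd_sum_of_free {G X R : Type*} [AddGroup G] [Fintype G]
    [AddAction G X] [CommSemiring R] {s : Finset X} {w : X → R} {d : R}
    (hs : ∀ g : G, ∀ x ∈ s, g +ᵥ x ∈ s) (hfree : ∀ g : G, ∀ x ∈ s, g +ᵥ x = x → g = 0)
    (hw : ∀ (g : G) x, w (g +ᵥ x) = w x) (hd : ∀ x ∈ s, d ∣ w x) :
    (Fintype.card G : R) * d ∣ ∑ x ∈ s, w x := by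
  classical
  let π : X → AddAction.orbitRel.Quotient G X := Quotient.mk _
  rw [← sum_fiberwise_of_maps_to (g := π) (t := s.image π)
    fun x hx => mem_image_of_mem π hx]
  refine dvd_sum fun q hq => ?_
  obtain ⟨x, hx, rfl⟩ := mem_image.1 hq
  have hinj : Injective (· +ᵥ x : G → X) := fun g h hgh => by
    have := hfree (-h + g) x hx (by simp only [add_vadd] at hgh ⊢; rw [hgh, neg_vadd_vadd])
    exact (neg_add_eq_zero.1 this).symm
  have hfiber : {y ∈ s | π y = π x} = univ.image (· +ᵥ x : G → X) := by
    ext y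
    simp only [mem_filter, mem_image, mem_univ, true_and, π, Quotient.eq,
      AddAction.orbitRel_apply, AddAction.mem_orbit_iff]
    exact ⟨fun h => h.2, fun ⟨g, hg⟩ => hg ▸ ⟨hs g x hx, g, rfl⟩⟩
  rw [hfiber, sum_image fun g _ h _ hgh => hinj hgh]
  simp only [hw, sum_const, card_univ, nsmul_eq_mul]
  exact mul_dvd_mul_left _ (hd x hx)

theorem Int.prime_pow_succ_dvd_pow_pow_succ_sub {p : ℕ} (hp : p.Prime) (a : ℤ) (k : ℕ) :
    (p : ℤ) ^ (k + 1) ∣ a ^ p ^ (k + 1) - a ^ p ^ k := by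
  simpa [← pow_mul, ← pow_succ'] using
    dvd_sub_pow_of_dvd_sub (Int.prime_dvd_pow_self_sub hp a) k

namespace ZMod

theorem natCast_vadd_eq_self_iff_period_dvd {n : ℕ} {X : Type*} [AddAction (ZMod n) X]
    (k : ℕ) (x : X) : (k : ZMod n) +ᵥ x = x ↔ AddAction.period (1 : ZMod n) x ∣ k := by
  rw [← nsmul_one, AddAction.nsmul_vadd_eq_iff_period_dvd]

variable {n : ℕ} [NeZero n]

theorem vadd_eq_self_iff_period_dvd_val {X : Type*} [AddAction (ZMod n) X] (c : ZMod n)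
    (x : X) : c +ᵥ x = x ↔ AddAction.period (1 : ZMod n) x ∣ c.val := by
  rw [← natCast_vadd_eq_self_iff_period_dvd, natCast_zmod_val]

theorem prod_eq_prod_range {M : Type*} [CommMonoid M] (F : ZMod n → M) :
    ∏ x, F x = ∏ i ∈ range n, F i :=
  prod_nbij' val (fun i => i) (fun _ _ => mem_range.2 (val_lt _)) (fun _ _ => mem_univ _)
    (fun x _ => natCast_zmod_val x) (fun i hi => val_cast_of_lt (mem_range.1 hi))
    (fun x _ => by rw [natCast_zmod_val])

theorem prod_castHom_eq_pow {M : Type*} [CommMonoid M] {m : ℕ} [NeZero m] (h : m ∣ n)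
    (F : ZMod m → M) : ∏ x : ZMod n, F (castHom h (ZMod m) x) = (∏ y, F y) ^ (n / m) := by
  have hperiodic (k : ℕ) : ∏ i ∈ range (m * k), F i = (∏ i ∈ range m, F i) ^ k := by
    induction k with
    | zero => simp
    | succ k ih =>
      rw [mul_add_one, prod_range_add, ih, pow_succ]
      simp
  obtain ⟨k, rfl⟩ := h
  rw [Nat.mul_div_cancel_left k (NeZero.pos m), prod_eq_prod_range, prod_eq_prod_range,
    ← hperiodic]
  simp only [map_natCast]

theorem prime_pow_vadd_eq_self_of_vadd_eq_self {p t : ℕ} [Fact p.Prime] {X : Type*}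
    [AddAction (ZMod (p ^ (t + 1))) X] {c : ZMod (p ^ (t + 1))} (hc : c ≠ 0) {x : X}
    (h : c +ᵥ x = x) : ((p ^ t : ℕ) : ZMod (p ^ (t + 1))) +ᵥ x = x := by
  have hp := (Fact.out : p.Prime)
  rw [vadd_eq_self_iff_period_dvd_val] at h
  rw [natCast_vadd_eq_self_iff_period_dvd]
  have hfull : AddAction.period (1 : ZMod (p ^ (t + 1))) x ∣ p ^ (t + 1) :=
    (natCast_vadd_eq_self_iff_period_dvd _ x).1 (by rw [natCast_self, zero_vadd])
  obtain ⟨j, -, hj⟩ := (Nat.dvd_prime_pow hp).1 hfull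
  have hlt : p ^ j < p ^ (t + 1) :=
    hj ▸ (Nat.le_of_dvd (val_pos.2 hc) h).trans_lt (val_lt c)
  rw [hj]
  exact pow_dvd_pow p (Nat.lt_succ_iff.1 ((Nat.pow_lt_pow_iff_right hp.one_lt).1 hlt))

theorem natCast_vadd_eq_self_iff_exists_comp_castHom {ι : Type*} {m : ℕ} (h : m ∣ n)
    (f : ZMod n → ι) :
    (m : ZMod n) +ᵥ f = f ↔ ∃ g : ZMod m → ι, g ∘ castHom h (ZMod m) = f := by
  constructor
  · intro hf
    have : Nonempty ι := ⟨f 0⟩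
    refine ((factorsThrough_iff f).1 fun a b hab => ?_).imp fun g hg => hg.symm
    have hba : (b - a) +ᵥ f = f := by
      rw [vadd_eq_self_iff_period_dvd_val]
      refine ((natCast_vadd_eq_self_iff_period_dvd _ f).1 hf).trans
        ((natCast_eq_zero_iff _ _).1 ?_)
      rw [← cast_eq_val, ← castHom_apply (h := h), map_sub, hab, sub_self]
    calc f a = f (-(b - a) + b) := by rw [neg_sub, sub_add_cancel]
      _ = f b := congrFun hba b
  · rintro ⟨g, rfl⟩
    funext x
    show g (castHom h _ (-(m : ZMod n) + x)) = g (castHom h _ x)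
    rw [map_add, map_neg, map_natCast, natCast_self, neg_zero, zero_add]

end ZMod

namespace Matrix

variable {ι R : Type*}

section CommMonoid

variable [CommMonoid R] {n : ℕ} [NeZero n]

def cycleWeight (A : Matrix ι ι R) (f : ZMod n → ι) : R :=
  ∏ j, A (f j) (f (j + 1))

theorem cycleWeight_vadd (A : Matrix ι ι R) (c : ZMod n) (f : ZMod n → ι) :
    A.cycleWeight (c +ᵥ f) = A.cycleWeight f :=
  Fintype.prod_equiv (Equiv.addLeft (-c)) _ _ fun j => by
    rw [Equiv.coe_addLeft, add_assoc]
    rfl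

theorem cycleWeight_comp_castHom (A : Matrix ι ι R) {m : ℕ} [NeZero m] (h : m ∣ n)
    (g : ZMod m → ι) :
    A.cycleWeight (g ∘ ZMod.castHom h (ZMod m)) = A.cycleWeight g ^ (n / m) := by
  rw [cycleWeight, cycleWeight, ← ZMod.prod_castHom_eq_pow h]
  simp only [Function.comp_apply, map_add, map_one]

end CommMonoid

section Trace

variable [Fintype ι] [DecidableEq ι] [CommSemiring R]

theorem trace_mul_pow_eq_sum (B A : Matrix ι ι R) (k : ℕ) :
    (B * A ^ k).trace = ∑ g : Fin (k + 1) → ι,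
      B (g (Fin.last k)) (g 0) * ∏ m : Fin k, A (g m.castSucc) (g m.succ) := by
  induction k generalizing B with
  | zero => simp [trace, ← (Equiv.funUnique (Fin 1) ι).symm.sum_comp]
  | succ k ih =>
    rw [pow_succ', ← mul_assoc, ih, ← (Fin.consEquiv fun _ : Fin (k + 2) => ι).sum_comp,
      Fintype.sum_prod_type, sum_comm]
    refine sum_congr rfl fun g _ => ?_
    simp only [Fin.consEquiv_apply, mul_apply, sum_mul, Fin.prod_univ_succ, Fin.cons_zero,
      Fin.cons_succ, Fin.castSucc_zero, ← Fin.succ_castSucc, ← Fin.succ_last]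
    refine sum_congr rfl fun z _ => ?_
    ring

theorem trace_pow_eq_sum_cycleWeight (A : Matrix ι ι R) (n : ℕ) [NeZero n] :
    (A ^ n).trace = ∑ f : ZMod n → ι, A.cycleWeight f := by
  obtain ⟨k, rfl⟩ := Nat.exists_eq_succ_of_ne_zero (NeZero.ne n)
  rw [pow_succ', trace_mul_pow_eq_sum]
  refine sum_congr rfl fun g _ => ?_
  -- `ZMod (k + 1)` is `Fin (k + 1)` by definition
  change _ = ∏ j : Fin (k + 1), A (g j) (g (j + 1))
  rw [Fin.prod_univ_castSucc, Fin.last_add_one, mul_comm]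
  simp only [Fin.coeSucc_eq_succ]

end Trace

section PrimePower

variable [Fintype ι] [DecidableEq ι] (p : ℕ) [Fact p.Prime]

theorem prime_pow_mul_dvd_sum_sub_sum_cycleWeight_pow (A : Matrix ι ι ℤ) (t : ℕ)
    (φ : ℤ → ℤ) {d : ℤ} (hd : ∀ f : ZMod (p ^ (t + 1)) → ι, d ∣ φ (A.cycleWeight f)) :
    (p : ℤ) ^ (t + 1) * d ∣ ∑ f : ZMod (p ^ (t + 1)) → ι, φ (A.cycleWeight f) -
      ∑ g : ZMod (p ^ t) → ι, φ (A.cycleWeight g ^ p) := by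
  have hdvd : p ^ t ∣ p ^ (t + 1) := pow_dvd_pow p t.le_succ
  set q : ZMod (p ^ (t + 1)) := ((p ^ t : ℕ) : ZMod (p ^ (t + 1)))
  have hq := ZMod.natCast_vadd_eq_self_iff_exists_comp_castHom (ι := ι) hdvd
  rw [← sum_filter_add_sum_filter_not univ (fun f => q +ᵥ f = f)]
  have hperiodic : ∑ f : ZMod (p ^ (t + 1)) → ι with q +ᵥ f = f, φ (A.cycleWeight f) =
      ∑ g : ZMod (p ^ t) → ι, φ (A.cycleWeight g ^ p) := by
    refine (sum_bij (fun g _ => g ∘ ZMod.castHom hdvd _)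
      (fun g _ => mem_filter.2 ⟨mem_univ _, (hq _).2 ⟨g, rfl⟩⟩)
      (fun g₁ _ g₂ _ h => (ZMod.castHom_surjective hdvd).injective_comp_right h)
      (fun f hf => ?_) (fun g _ => ?_)).symm
    · obtain ⟨g, hg⟩ := (hq f).1 (mem_filter.1 hf).2
      exact ⟨g, mem_univ _, hg⟩
    · rw [cycleWeight_comp_castHom, pow_succ, Nat.mul_div_cancel_left _ (NeZero.pos _)]
  rw [hperiodic, add_sub_cancel_left]
  have hfree := AddAction.card_mul_dvd_sum_of_free (G := ZMod (p ^ (t + 1)))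
    (s := {f | ¬ q +ᵥ f = f}) (w := φ ∘ A.cycleWeight) (d := d) ?_ ?_ ?_ fun f _ => hd f
  · simpa [ZMod.card] using hfree
  · intro g f hf
    simp only [mem_filter, mem_univ, true_and] at hf ⊢
    rwa [← add_vadd, add_comm q g, add_vadd, vadd_left_cancel_iff]
  · intro g f hf hgf
    by_contra hg
    exact (mem_filter.1 hf).2 (ZMod.prime_pow_vadd_eq_self_of_vadd_eq_self hg hgf)
  · intro g f
    simp only [Function.comp_apply, cycleWeight_vadd]

theorem prime_pow_dvd_sum_cycleWeight_pow_sub (A : Matrix ι ι ℤ) (t s : ℕ) :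
    (p : ℤ) ^ (t + s + 1) ∣
      ∑ g : ZMod (p ^ t) → ι, (A.cycleWeight g ^ p ^ (s + 1) - A.cycleWeight g ^ p ^ s) := by
  have hp := (Fact.out : p.Prime)
  induction t generalizing s with
  | zero =>
    exact dvd_sum fun g _ => by simpa using Int.prime_pow_succ_dvd_pow_pow_succ_sub hp _ s
  | succ t ih =>
    have hsplit := prime_pow_mul_dvd_sum_sub_sum_cycleWeight_pow p A t
      (fun a => a ^ p ^ (s + 1) - a ^ p ^ s)
      fun f => Int.prime_pow_succ_dvd_pow_pow_succ_sub hp _ s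
    simp only [← pow_mul, ← pow_succ'] at hsplit
    have ih' := ih (s + 1)
    rw [show t + (s + 1) + 1 = t + 1 + (s + 1) by omega, pow_add] at ih'
    rw [show t + 1 + s + 1 = t + 1 + (s + 1) by omega, pow_add]
    simpa using dvd_add hsplit ih'

theorem trace_pow_prime_pow_succ_modEq (A : Matrix ι ι ℤ) (t : ℕ) :
    (A ^ p ^ (t + 1)).trace ≡ (A ^ p ^ t).trace [ZMOD (p : ℤ) ^ (t + 1)] := by
  rw [Int.modEq_comm, Int.modEq_iff_dvd, trace_pow_eq_sum_cycleWeight,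
    trace_pow_eq_sum_cycleWeight]
  have h1 := prime_pow_mul_dvd_sum_sub_sum_cycleWeight_pow p A t id fun _ => one_dvd _
  have h2 := prime_pow_dvd_sum_cycleWeight_pow_sub p A t 0
  rw [mul_one] at h1
  simp only [zero_add, pow_zero, pow_one, id, sum_sub_distrib] at h1 h2
  simpa using dvd_add h1 h2

end PrimePower

end Matrix

/-- Euler congruence for Lefschetz-number-type sequences: with
`L(k) = Σᵢ (−1)ⁱ·tr(Aᵢᵏ)` for integer matrices `Aᵢ`, one has
`L(p^r) ≡ L(p^{r−1}) (mod p^r)` for every prime `p` and `r ≥ 1`. -/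
theorem euler_congruence_lefschetz (m : ℕ) (sz : Fin (m + 1) → ℕ)
    (A : (i : Fin (m + 1)) → Matrix (Fin (sz i)) (Fin (sz i)) ℤ)
    (p : ℕ) (hp : p.Prime) (r : ℕ) (hr : 1 ≤ r) :
    (∑ i : Fin (m + 1), (-1 : ℤ) ^ (i : ℕ) * (A i ^ (p ^ r)).trace) ≡
      (∑ i : Fin (m + 1), (-1 : ℤ) ^ (i : ℕ) * (A i ^ (p ^ (r - 1))).trace)
        [ZMOD (p ^ r)] := by
  have := Fact.mk hp
  obtain ⟨t, rfl⟩ := Nat.exists_eq_add_of_le' hr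
  rw [Nat.add_sub_cancel]
  exact Int.ModEq.sum fun i _ => ((A i).trace_pow_prime_pow_succ_modEq p t).mul_left _
end
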